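/- arXiv:2106.15208 — 4 statements merged into one kernel-verified Lean document; each statement's English description precedes it below -/
import Mathlib

section
/- Let (Ω, 𝒜, P) be a finite probability space, (F_t)_{t=0..T} a filtration with F_0 trivial, and G a random variable with finitely many values, each of positive probability. Suppose P(G = c | F_t) > 0 almost surely for all c and all t ≤ T−1. Define q_t^G(ω) = P(G = G(ω) | F_t)(ω) / P(G = G(ω)), and let G_t = F_t ∨ σ(G). Then the process (1/q_t^G)_{t=0..T−1} is a martingale with respect to the enlarged filtration (G_t) and P. -/
/-!
For `A ∈ 𝒢_s = ℱ_s ∨ σ(G)` each slice `A ∩ {G = c}` has the form `F_c ∩ {G = c}` with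
`F_c ∈ ℱ_s`. On that slice `1 / q_u^G = P(G = c) / P(G = c | ℱ_u)`, and pulling the
`ℱ_u`-measurable factor out of the conditional expectation gives
`∫_{F_c ∩ {G = c}} 1 / P(G = c | ℱ_u) dP = P(F_c)` for every `u ≥ s`. Hence
`∫_A 1 / q_u^G dP = ∑_c P(G = c) P(F_c)` does not depend on `u`.
-/

open MeasureTheory Set

section

variable {Ω Γ : Type*} {mΩ : MeasurableSpace Ω} {μ : Measure Ω}

lemma MeasureTheory.Integrable.of_finite_of_aestronglyMeasurable {E : Type*}
    [NormedAddCommGroup E] [Finite Ω] [IsFiniteMeasure μ] {f : Ω → E}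
    (hf : AEStronglyMeasurable f μ) :
    Integrable f μ := by
  obtain ⟨C, hC⟩ := (finite_range fun ω => ‖f ω‖).bddAbove
  exact .of_bound hf C (ae_of_all _ fun ω => hC (mem_range_self ω))

lemma exists_measurableSet_inter_preimage_singleton_eq {m : MeasurableSpace Ω}
    {mΓ : MeasurableSpace Γ} {G : Ω → Γ} {A : Set Ω}
    (hA : MeasurableSet[m ⊔ mΓ.comap G] A) (c : Γ) :
    ∃ F, MeasurableSet[m] F ∧ A ∩ G ⁻¹' {c} = F ∩ G ⁻¹' {c} := by
  set S := G ⁻¹' {c}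
  have hAS : MeasurableSet[(m ⊔ mΓ.comap G).comap ((↑) : S → Ω)] ((↑) ⁻¹' A) :=
    ⟨A, hA, rfl⟩
  -- `G` is constant on `S`, so `σ(G)` contributes nothing to the trace σ-algebra on `S`.
  have hGS : G ∘ ((↑) : S → Ω) = fun _ => c := funext fun ω => ω.2
  rw [MeasurableSpace.comap_sup, MeasurableSpace.comap_comp, hGS, MeasurableSpace.comap_const,
    sup_bot_eq] at hAS
  obtain ⟨F, hF, hFA⟩ := hAS
  refine ⟨F, hF, ?_⟩
  rw [inter_comm, inter_comm F]
  exact (Subtype.preimage_coe_eq_preimage_coe_iff.1 hFA).symm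

lemma setIntegral_eq_sum_inter_preimage_singleton {E : Type*} [NormedAddCommGroup E]
    [NormedSpace ℝ E] [Fintype Γ] [MeasurableSpace Γ] [MeasurableSingletonClass Γ]
    {G : Ω → Γ} (hG : Measurable G) {A : Set Ω} (hA : MeasurableSet A) {f : Ω → E}
    (hf : IntegrableOn f A μ) :
    ∫ ω in A, f ω ∂μ = ∑ c, ∫ ω in A ∩ G ⁻¹' {c}, f ω ∂μ := by
  have hcover : ⋃ c, A ∩ G ⁻¹' {c} = A := by
    rw [← inter_iUnion, ← preimage_iUnion, iUnion_singleton_eq_range, range_id', preimage_univ,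
      inter_univ]
  conv_lhs => rw [← hcover]
  refine integral_iUnion_fintype (fun c => hA.inter (hG (measurableSet_singleton c))) ?_
    fun c => hf.mono_set inter_subset_left
  exact fun c c' hcc' => (disjoint_singleton.2 hcc').preimage G |>.inter_left' A |>.inter_right' A

lemma setIntegral_inter_inv_condExp_indicator [Finite Ω] [IsFiniteMeasure μ]
    {m : MeasurableSpace Ω} (hm : m ≤ mΩ) {B : Set Ω} (hB : MeasurableSet[mΩ] B)
    (hpos : ∀ᵐ ω ∂μ, 0 < μ[B.indicator (fun _ => (1 : ℝ)) | m] ω)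
    {F : Set Ω} (hF : MeasurableSet[m] F) :
    ∫ ω in F ∩ B, (μ[B.indicator (fun _ => (1 : ℝ)) | m] ω)⁻¹ ∂μ = μ.real F := by
  set p := μ[B.indicator (fun _ => (1 : ℝ)) | m]
  have hp : StronglyMeasurable[m] p⁻¹ :=
    stronglyMeasurable_condExp.measurable.inv.stronglyMeasurable
  have hind : Integrable (B.indicator (fun _ => (1 : ℝ))) μ := (integrable_const 1).indicator hB
  have hint : Integrable (p⁻¹ * B.indicator (fun _ => (1 : ℝ))) μ :=
    .of_finite_of_aestronglyMeasurable
      ((hp.mono hm).aestronglyMeasurable.mul hind.aestronglyMeasurable)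
  have hpull : μ[p⁻¹ * B.indicator (fun _ => (1 : ℝ)) | m] =ᵐ[μ] fun _ => 1 := by
    filter_upwards [condExp_mul_of_stronglyMeasurable_left hp hint hind, hpos] with ω h1 h2
    rw [h1]
    exact inv_mul_cancel₀ h2.ne'
  calc ∫ ω in F ∩ B, (p ω)⁻¹ ∂μ
      = ∫ ω in F, (p⁻¹ * B.indicator (fun _ => (1 : ℝ))) ω ∂μ := by
        rw [← setIntegral_indicator hB]
        congr 1 with ω
        by_cases hω : ω ∈ B <;> simp [hω]
    _ = ∫ ω in F, μ[p⁻¹ * B.indicator (fun _ => (1 : ℝ)) | m] ω ∂μ :=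
        (setIntegral_condExp hm hint hF).symm
    _ = μ.real F := by
        rw [setIntegral_congr_ae (hm F hF) (hpull.mono fun _ h _ => h)]
        simp

/-- The paper's `q_t^G` is `condDensity μ G (ℱ t)`. -/
noncomputable def condDensity (μ : Measure Ω) (G : Ω → Γ) (m : MeasurableSpace Ω) (ω : Ω) :
    ℝ :=
  μ[(G ⁻¹' {G ω}).indicator (fun _ => (1 : ℝ)) | m] ω / μ.real (G ⁻¹' {G ω})

lemma measurable_condDensity [Countable Γ] [MeasurableSpace Γ] [MeasurableSingletonClass Γ]
    {m m' : MeasurableSpace Ω} {G : Ω → Γ} (hG : Measurable[m'] G) (hm : m ≤ m') :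
    Measurable[m'] (condDensity μ G m) := by
  let φ (c : Γ) (ω : Ω) : ℝ :=
    μ[(G ⁻¹' {c}).indicator (fun _ => (1 : ℝ)) | m] ω / μ.real (G ⁻¹' {c})
  have hφ : ∀ c, Measurable[m'] (φ c) := fun c =>
    (stronglyMeasurable_condExp.measurable.mono hm le_rfl).div_const _
  exact (measurable_from_prod_countable_right (f := Function.uncurry φ) hφ).comp
    (hG.prodMk measurable_id)

lemma setIntegral_inv_condDensity [Finite Ω] [IsFiniteMeasure μ] [Fintype Γ]
    [MeasurableSpace Γ] [MeasurableSingletonClass Γ] {m : MeasurableSpace Ω} (hm : m ≤ mΩ)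
    {G : Ω → Γ} (hG : Measurable[mΩ] G)
    (hpos : ∀ c, ∀ᵐ ω ∂μ, 0 < μ[(G ⁻¹' {c}).indicator (fun _ => (1 : ℝ)) | m] ω)
    {A : Set Ω} (hA : MeasurableSet[mΩ] A) {F : Γ → Set Ω} (hF : ∀ c, MeasurableSet[m] (F c))
    (hAF : ∀ c, A ∩ G ⁻¹' {c} = F c ∩ G ⁻¹' {c}) :
    ∫ ω in A, (condDensity μ G m ω)⁻¹ ∂μ = ∑ c, μ.real (G ⁻¹' {c}) * μ.real (F c) := by
  have hint : Integrable (fun ω => (condDensity μ G m ω)⁻¹) μ :=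
    .of_finite_of_aestronglyMeasurable
      ((measurable_condDensity hG hm).inv.aestronglyMeasurable)
  rw [setIntegral_eq_sum_inter_preimage_singleton hG hA hint.integrableOn]
  refine Finset.sum_congr rfl fun c _ => ?_
  have hfibre : MeasurableSet[mΩ] (F c ∩ G ⁻¹' {c}) :=
    (hm _ (hF c)).inter (hG (measurableSet_singleton c))
  rw [hAF, setIntegral_congr_fun hfibre (g := fun ω => μ.real (G ⁻¹' {c}) *
      (μ[(G ⁻¹' {c}).indicator (fun _ => (1 : ℝ)) | m] ω)⁻¹), integral_const_mul,
    setIntegral_inter_inv_condExp_indicator hm (hG (measurableSet_singleton c)) (hpos c) (hF c)]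
  rintro ω ⟨-, rfl⟩
  simp only [condDensity]
  rw [inv_div, div_eq_mul_inv]

end

theorem stmt1_general {Ω : Type*} [Fintype Ω] {mΩ : MeasurableSpace Ω}
    (μ : Measure Ω) [IsProbabilityMeasure μ]
    (T : ℕ) (ℱ : Filtration ℕ mΩ)
    {Γ : Type*} [Fintype Γ] [MeasurableSpace Γ] [MeasurableSingletonClass Γ]
    (G : Ω → Γ) (hG : Measurable G)
    (hpos : ∀ c : Γ, ∀ t ≤ T - 1, ∀ᵐ ω ∂μ,
      0 < (μ[(G ⁻¹' {c}).indicator (fun _ => (1 : ℝ)) | ℱ t]) ω)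
    (qG : ℕ → Ω → ℝ)
    (hqG : ∀ t ω, qG t ω =
      (μ[(G ⁻¹' {G ω}).indicator (fun _ => (1 : ℝ)) | ℱ t]) ω / (μ (G ⁻¹' {G ω})).toReal)
    (𝒢 : Filtration ℕ mΩ)
    (h𝒢 : ∀ t, (𝒢 t : MeasurableSpace Ω) =
      (ℱ t : MeasurableSpace Ω) ⊔ MeasurableSpace.comap G inferInstance) :
    (∀ t ≤ T - 1, StronglyMeasurable[𝒢 t] (fun ω => (qG t ω)⁻¹)) ∧
    ∀ s t, s ≤ t → t ≤ T - 1 →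
      μ[(fun ω => (qG t ω)⁻¹) | 𝒢 s] =ᵐ[μ] fun ω => (qG s ω)⁻¹ := by
  have hq : ∀ t, qG t = condDensity μ G (ℱ t) := fun t => funext (hqG t)
  have hmeas : ∀ t, StronglyMeasurable[𝒢 t] (fun ω => (qG t ω)⁻¹) := fun t => by
    have hG𝒢 : Measurable[𝒢 t] G := measurable_iff_comap_le.2 (h𝒢 t ▸ le_sup_right)
    rw [hq]
    exact (measurable_condDensity hG𝒢 (h𝒢 t ▸ le_sup_left)).inv.stronglyMeasurable
  have hint : ∀ t, Integrable (fun ω => (qG t ω)⁻¹) μ := fun t =>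
    .of_finite_of_aestronglyMeasurable ((hmeas t).mono (𝒢.le t)).aestronglyMeasurable
  refine ⟨fun t _ => hmeas t, fun s t hst htT => ?_⟩
  refine (ae_eq_condExp_of_forall_setIntegral_eq (𝒢.le s) (hint t)
    (fun _ _ _ => (hint s).integrableOn) (fun A hA _ => ?_) (hmeas s).aestronglyMeasurable).symm
  have hAm : MeasurableSet A := 𝒢.le s A hA
  rw [h𝒢] at hA
  choose F hF hAF using exists_measurableSet_inter_preimage_singleton_eq hA
  rw [hq, hq, setIntegral_inv_condDensity (ℱ.le s) hG (hpos · s (hst.trans htT)) hAm hF hAF,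
    setIntegral_inv_condDensity (ℱ.le t) hG (hpos · t htT) hAm (fun c => ℱ.mono hst _ (hF c))
      hAF]

/-- In the initially enlarged filtration `𝒢 t = ℱ t ⊔ σ(G)`, the process
`(1 / q_t^G)_{t = 0..T-1}` is a `(P, 𝒢)`-martingale on the horizon `{0,...,T-1}`. -/
theorem stmt1 {Ω : Type*} [Fintype Ω] {mΩ : MeasurableSpace Ω}
    (μ : Measure Ω) [IsProbabilityMeasure μ]
    (T : ℕ) (hT : 1 ≤ T) (ℱ : Filtration ℕ mΩ) (hF0 : ℱ 0 = ⊥)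
    {Γ : Type*} [Fintype Γ] [MeasurableSpace Γ] [MeasurableSingletonClass Γ]
    (G : Ω → Γ) (hG : Measurable G)
    (hposG : ∀ c : Γ, 0 < (μ (G ⁻¹' {c})).toReal)
    (hpos : ∀ c : Γ, ∀ t ≤ T - 1, ∀ᵐ ω ∂μ,
      0 < (μ[(G ⁻¹' {c}).indicator (fun _ => (1 : ℝ)) | ℱ t]) ω)
    (qG : ℕ → Ω → ℝ)
    (hqG : ∀ t ω, qG t ω =
      (μ[(G ⁻¹' {G ω}).indicator (fun _ => (1 : ℝ)) | ℱ t]) ω / (μ (G ⁻¹' {G ω})).toReal)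
    (𝒢 : Filtration ℕ mΩ)
    (h𝒢 : ∀ t, (𝒢 t : MeasurableSpace Ω) =
      (ℱ t : MeasurableSpace Ω) ⊔ MeasurableSpace.comap G inferInstance) :
    (∀ t ≤ T - 1, StronglyMeasurable[𝒢 t] (fun ω => (qG t ω)⁻¹)) ∧
    ∀ s t, s ≤ t → t ≤ T - 1 →
      μ[(fun ω => (qG t ω)⁻¹) | 𝒢 s] =ᵐ[μ] fun ω => (qG s ω)⁻¹ :=
  stmt1_general μ T ℱ G hG hpos qG hqG 𝒢 h𝒢
end

section
/- With Q_t defined by dQ_t/dP = 1/q_t^G on G_t = F_t ∨ σ(G) (so that F_t and σ(G) are Q_t-independent and Q_t = P on F_t), every (P, F)-martingale on {0,...,t} is a (Q_t, G)-martingale on {0,...,t}, where G_s = F_s ∨ σ(G). Conversely, every F-adapted process on {0,...,t} that is a (Q_t, G)-martingale is a (P, F)-martingale, so the two sets of martingales (restricted to F-adapted processes) coincide. -/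
/-!
On `{G = c}` the density `1 / q^G_t` equals `P(G = c) / P(G = c | ℱ_t)`, and the factor
`1 / P(G = c | ℱ_t)` is `ℱ_t`-measurable, so pulling it out of `P(G = c | ℱ_t)` gives
`∫_{G ∈ C} f dQ = P(G ∈ C) ∫ f dP` for every `ℱ_t`-measurable `f`: under `Q`, `ℱ_t` is
independent of `G` and `Q = P` on `ℱ_t`. For `s ≤ r ≤ t` the sets `B ∩ {G ∈ C}` with
`B ∈ ℱ_s` form a π-system generating `𝒢_s`, and on them the `Q`-integrals of `X_r` and `X_s`
are `P(G ∈ C)` times their `P`-integrals over `B`; hence each martingale property implies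
the other (for the converse take `C = univ`).
-/

open MeasureTheory Set MeasurableSpace

section

variable {Ω Γ : Type*} {n m mΩ : MeasurableSpace Ω}

theorem MeasureTheory.StronglyMeasurable.integrable_of_finite [Finite Ω] {μ : Measure Ω}
    [IsFiniteMeasure μ] {E : Type*} [NormedAddCommGroup E] {f : Ω → E}
    (hf : StronglyMeasurable f) : Integrable f μ :=
  ⟨hf.aestronglyMeasurable, .of_finite⟩

theorem MeasureTheory.integral_mul_condExp_indicator (hm : m ≤ mΩ)
    {μ : Measure Ω} [IsFiniteMeasure μ] {A : Set Ω} (hA : MeasurableSet A) {g : Ω → ℝ}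
    (hg : StronglyMeasurable[m] g) (hgA : Integrable (A.indicator g) μ) :
    ∫ ω, g ω * μ[A.indicator (fun _ => (1 : ℝ)) | m] ω ∂μ = ∫ ω in A, g ω ∂μ := by
  have hg_mul : g * A.indicator (fun _ => (1 : ℝ)) = A.indicator g := by
    ext ω; by_cases hω : ω ∈ A <;> simp [hω]
  have h_pull := condExp_mul_of_stronglyMeasurable_left hg (hg_mul ▸ hgA)
    ((integrable_const (1 : ℝ)).indicator hA)
  calc ∫ ω, g ω * μ[A.indicator (fun _ => (1 : ℝ)) | m] ω ∂μ
      = ∫ ω, μ[g * A.indicator (fun _ => (1 : ℝ)) | m] ω ∂μ :=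
        integral_congr_ae h_pull.symm
    _ = ∫ ω, (g * A.indicator (fun _ => (1 : ℝ))) ω ∂μ := integral_condExp hm
    _ = ∫ ω, A.indicator g ω ∂μ := by rw [hg_mul]
    _ = ∫ ω in A, g ω ∂μ := integral_indicator hA

theorem IsPiSystem.image2_inter {S T : Set (Set Ω)} (hS : IsPiSystem S) (hT : IsPiSystem T) :
    IsPiSystem (image2 (· ∩ ·) S T) := by
  rintro _ ⟨s₁, hs₁, t₁, ht₁, rfl⟩ _ ⟨s₂, hs₂, t₂, ht₂, rfl⟩ hne
  rw [inter_inter_inter_comm] at hne ⊢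
  exact mem_image2_of_mem (hS _ hs₁ _ hs₂ hne.left) (hT _ ht₁ _ ht₂ hne.right)

theorem MeasurableSpace.sup_eq_generateFrom_image2_inter (m₁ m₂ : MeasurableSpace Ω) :
    m₁ ⊔ m₂ =
      generateFrom (image2 (· ∩ ·) {s | MeasurableSet[m₁] s} {t | MeasurableSet[m₂] t}) := by
  refine le_antisymm (sup_le ?_ ?_) (generateFrom_le ?_)
  · exact fun s hs => measurableSet_generateFrom ⟨s, hs, univ, .univ, inter_univ s⟩
  · exact fun t ht => measurableSet_generateFrom ⟨univ, .univ, t, ht, univ_inter t⟩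
  · rintro _ ⟨s, hs, t, ht, rfl⟩
    exact (le_sup_left (b := m₂) s hs).inter (le_sup_right (a := m₁) t ht)

theorem MeasureTheory.setIntegral_eq_of_isPiSystem {E : Type*} [NormedAddCommGroup E]
    [NormedSpace ℝ E] {μ : Measure Ω} (hm : m ≤ mΩ)
    {S : Set (Set Ω)} (h_eq : m = generateFrom S) (h_inter : IsPiSystem S) {f g : Ω → E}
    (hf : Integrable f μ) (hg : Integrable g μ)
    (h_univ : univ ∈ S) (basic : ∀ s ∈ S, ∫ x in s, f x ∂μ = ∫ x in s, g x ∂μ)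
    {s : Set Ω} (hs : MeasurableSet[m] s) :
    ∫ x in s, f x ∂μ = ∫ x in s, g x ∂μ := by
  induction s, hs using induction_on_inter h_eq h_inter with
  | empty => simp
  | basic s hs => exact basic s hs
  | compl s hs ih =>
    have hf_compl := integral_add_compl (hm s hs) hf
    have hg_compl := integral_add_compl (hm s hs) hg
    have h_int : ∫ x, f x ∂μ = ∫ x, g x ∂μ := by simpa using basic univ h_univ
    rw [← sub_eq_of_eq_add' hf_compl.symm, ← sub_eq_of_eq_add' hg_compl.symm, ih, h_int]
  | iUnion s hd hs ih =>
    rw [integral_iUnion (fun i => hm _ (hs i)) hd hf.integrableOn,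
      integral_iUnion (fun i => hm _ (hs i)) hd hg.integrableOn]
    exact tsum_congr ih

theorem MeasureTheory.setIntegral_eq_of_forall_inter {E : Type*} [NormedAddCommGroup E]
    [NormedSpace ℝ E] {μ : Measure Ω} (hm : n ⊔ m ≤ mΩ) {f g : Ω → E}
    (hf : Integrable f μ) (hg : Integrable g μ)
    (h_inter : ∀ s, MeasurableSet[n] s → ∀ t, MeasurableSet[m] t →
      ∫ x in s ∩ t, f x ∂μ = ∫ x in s ∩ t, g x ∂μ)
    {s : Set Ω} (hs : MeasurableSet[n ⊔ m] s) :
    ∫ x in s, f x ∂μ = ∫ x in s, g x ∂μ := by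
  refine setIntegral_eq_of_isPiSystem hm (sup_eq_generateFrom_image2_inter n m)
    ((@isPiSystem_measurableSet _ n).image2_inter (@isPiSystem_measurableSet _ m)) hf hg
    ⟨univ, @MeasurableSet.univ _ n, univ, @MeasurableSet.univ _ m, inter_univ _⟩ ?_ hs
  rintro _ ⟨s, hs, t, ht, rfl⟩
  exact h_inter s hs t ht

/-- The paper's `q^G`: `P(G = c | m) / P(G = c)` at `c = G ω`. -/
noncomputable def condProbRatio (μ : Measure Ω) (m : MeasurableSpace Ω) (G : Ω → Γ)
    (ω : Ω) : ℝ :=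
  μ[(G ⁻¹' {G ω}).indicator (fun _ => (1 : ℝ)) | m] ω / μ.real (G ⁻¹' {G ω})

noncomputable def martingalePreservingMeasure (μ : Measure Ω) (m : MeasurableSpace Ω)
    (G : Ω → Γ) : Measure[mΩ] Ω :=
  μ.withDensity fun ω => ENNReal.ofReal (condProbRatio μ m G ω)⁻¹

instance [Finite Ω] {μ : Measure Ω} [IsFiniteMeasure μ] {G : Ω → Γ} :
    IsFiniteMeasure (martingalePreservingMeasure μ m G) :=
  isFiniteMeasure_withDensity_ofReal .of_finite

section condProbRatio

variable [MeasurableSpace Γ] [MeasurableSingletonClass Γ] {μ : Measure Ω} {G : Ω → Γ}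

theorem measurable_condProbRatio [Countable Γ] (hm : m ≤ mΩ) (hG : Measurable G) :
    Measurable (condProbRatio μ m G) := by
  have h_uncurry : Measurable fun p : Ω × Γ =>
      μ[(G ⁻¹' {p.2}).indicator (fun _ => (1 : ℝ)) | m] p.1 / μ.real (G ⁻¹' {p.2}) :=
    measurable_from_prod_countable_left fun c =>
      show Measurable fun ω =>
          μ[(G ⁻¹' {c}).indicator (fun _ => (1 : ℝ)) | m] ω / μ.real (G ⁻¹' {c}) from
        (stronglyMeasurable_condExp.mono hm).measurable.div_const _
  exact h_uncurry.comp (measurable_id.prodMk hG)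

theorem setIntegral_preimage_singleton_martingalePreservingMeasure [Finite Ω] [Countable Γ]
    [IsFiniteMeasure μ] (hm : m ≤ mΩ) (hG : Measurable G)
    (hpos : ∀ c, ∀ᵐ ω ∂μ, 0 < μ[(G ⁻¹' {c}).indicator (fun _ => (1 : ℝ)) | m] ω)
    {f : Ω → ℝ} (hf : StronglyMeasurable[m] f) (c : Γ) :
    ∫ ω in G ⁻¹' {c}, f ω ∂martingalePreservingMeasure μ m G =
      μ.real (G ⁻¹' {c}) * ∫ ω, f ω ∂μ := by
  set p := μ[(G ⁻¹' {c}).indicator (fun _ => (1 : ℝ)) | m]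
  have hGc : MeasurableSet (G ⁻¹' {c}) := hG (measurableSet_singleton c)
  have hfp : StronglyMeasurable[m] (fun ω => f ω / p ω) :=
    (hf.measurable.div stronglyMeasurable_condExp.measurable).stronglyMeasurable
  have h_density : ∀ᵐ ω ∂μ.restrict (G ⁻¹' {c}),
      (ENNReal.ofReal (condProbRatio μ m G ω)⁻¹).toReal • f ω =
        μ.real (G ⁻¹' {c}) * (f ω / p ω) := by
    filter_upwards [ae_restrict_mem hGc, ae_restrict_of_ae (hpos c)] with ω hωc hω
    rw [mem_preimage, mem_singleton_iff] at hωc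
    rw [condProbRatio, hωc, inv_div, ENNReal.toReal_ofReal (by positivity), smul_eq_mul]
    ring
  calc ∫ ω in G ⁻¹' {c}, f ω ∂martingalePreservingMeasure μ m G
      = ∫ ω in G ⁻¹' {c}, μ.real (G ⁻¹' {c}) * (f ω / p ω) ∂μ := by
        rw [martingalePreservingMeasure, setIntegral_withDensity_eq_setIntegral_toReal_smul
          (f := fun ω => ENNReal.ofReal (condProbRatio μ m G ω)⁻¹)
          (measurable_condProbRatio hm hG).inv.ennreal_ofReal
          (ae_of_all _ fun _ => ENNReal.ofReal_lt_top) _ hGc]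
        exact integral_congr_ae h_density
    _ = μ.real (G ⁻¹' {c}) * ∫ ω, f ω / p ω * p ω ∂μ := by
        rw [integral_const_mul, integral_mul_condExp_indicator hm hGc hfp
          (((hfp.mono hm).indicator hGc).integrable_of_finite (μ := μ))]
    _ = μ.real (G ⁻¹' {c}) * ∫ ω, f ω ∂μ := by
        congr 1
        refine integral_congr_ae ?_
        filter_upwards [hpos c] with ω hω
        exact div_mul_cancel₀ _ hω.ne'

theorem setIntegral_preimage_martingalePreservingMeasure [Finite Ω] [Fintype Γ]
    [IsFiniteMeasure μ] (hm : m ≤ mΩ) (hG : Measurable G)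
    (hpos : ∀ c, ∀ᵐ ω ∂μ, 0 < μ[(G ⁻¹' {c}).indicator (fun _ => (1 : ℝ)) | m] ω)
    {f : Ω → ℝ} (hf : StronglyMeasurable[m] f) (C : Set Γ) :
    ∫ ω in G ⁻¹' C, f ω ∂martingalePreservingMeasure μ m G =
      μ.real (G ⁻¹' C) * ∫ ω, f ω ∂μ := by
  classical
  have hGc : ∀ c, MeasurableSet (G ⁻¹' {c}) := fun c => hG (measurableSet_singleton c)
  have hC : G ⁻¹' C = ⋃ c ∈ C.toFinset, G ⁻¹' {c} := by ext; simp
  calc ∫ ω in G ⁻¹' C, f ω ∂martingalePreservingMeasure μ m G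
      = ∑ c ∈ C.toFinset, ∫ ω in G ⁻¹' {c}, f ω
          ∂martingalePreservingMeasure μ m G := by
        rw [hC, integral_biUnion_finset _ (fun c _ => hGc c)
          ((pairwiseDisjoint_fiber G _).subset (subset_univ _))
          (fun _ _ => ((hf.mono hm).integrable_of_finite).integrableOn)]
    _ = ∑ c ∈ C.toFinset, μ.real (G ⁻¹' {c}) * ∫ ω, f ω ∂μ :=
        Finset.sum_congr rfl fun c _ =>
          setIntegral_preimage_singleton_martingalePreservingMeasure hm hG hpos hf c
    _ = μ.real (G ⁻¹' C) * ∫ ω, f ω ∂μ := by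
        rw [← Finset.sum_mul, sum_measureReal_preimage_singleton _ (fun c _ => hGc c),
          coe_toFinset]

end condProbRatio

section Decoupling

variable [MeasurableSpace Γ] {μ Q : Measure Ω} {G : Ω → Γ}

theorem setIntegral_inter_preimage_eq_mul_setIntegral (hm : m ≤ mΩ)
    (hQ : ∀ f : Ω → ℝ, StronglyMeasurable[m] f → ∀ C : Set Γ, MeasurableSet C →
      ∫ ω in G ⁻¹' C, f ω ∂Q = μ.real (G ⁻¹' C) * ∫ ω, f ω ∂μ)
    {f : Ω → ℝ} (hf : StronglyMeasurable[m] f) {B : Set Ω} (hB : MeasurableSet[m] B)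
    {C : Set Γ} (hC : MeasurableSet C) :
    ∫ ω in B ∩ G ⁻¹' C, f ω ∂Q = μ.real (G ⁻¹' C) * ∫ ω in B, f ω ∂μ := by
  rw [inter_comm, ← setIntegral_indicator (hm B hB), hQ _ (hf.indicator hB) C hC,
    integral_indicator (hm B hB)]

theorem condExp_ae_eq_iff_condExp_sup_comap_ae_eq [Finite Ω] [IsProbabilityMeasure μ]
    [IsFiniteMeasure Q] (hG : Measurable G) (hnm : n ≤ m) (hm : m ≤ mΩ)
    (hQ : ∀ f : Ω → ℝ, StronglyMeasurable[m] f → ∀ C : Set Γ, MeasurableSet C →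
      ∫ ω in G ⁻¹' C, f ω ∂Q = μ.real (G ⁻¹' C) * ∫ ω, f ω ∂μ)
    {Y Z : Ω → ℝ} (hY : StronglyMeasurable[m] Y) (hZ : StronglyMeasurable[n] Z) :
    μ[Y | n] =ᵐ[μ] Z ↔ Q[Y | n ⊔ MeasurableSpace.comap G inferInstance] =ᵐ[Q] Z := by
  have hn : n ≤ mΩ := hnm.trans hm
  have hnG : n ⊔ MeasurableSpace.comap G inferInstance ≤ mΩ := sup_le hn hG.comap_le
  have hn_le : n ≤ n ⊔ MeasurableSpace.comap G inferInstance := le_sup_left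
  have hZm : StronglyMeasurable[m] Z := hZ.mono hnm
  constructor
  · intro hμ
    refine (ae_eq_condExp_of_forall_setIntegral_eq hnG (hY.mono hm).integrable_of_finite
      (fun _ _ _ => (hZ.mono hn).integrable_of_finite.integrableOn) (fun A hA _ => ?_)
      (hZ.mono hn_le).aestronglyMeasurable).symm
    refine setIntegral_eq_of_forall_inter hnG (hZ.mono hn).integrable_of_finite
      (hY.mono hm).integrable_of_finite ?_ hA
    rintro B hB _ ⟨C, hC, rfl⟩
    rw [setIntegral_inter_preimage_eq_mul_setIntegral hm hQ hZm (hnm B hB) hC,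
      setIntegral_inter_preimage_eq_mul_setIntegral hm hQ hY (hnm B hB) hC,
      ← setIntegral_condExp hn (hY.mono hm).integrable_of_finite hB,
      setIntegral_congr_ae (hn B hB) (hμ.mono fun _ h _ => h)]
  · intro hQY
    have hQμ : ∀ {f : Ω → ℝ}, StronglyMeasurable[m] f → ∀ {B}, MeasurableSet[m] B →
        ∫ ω in B, f ω ∂Q = ∫ ω in B, f ω ∂μ := fun hf B hB => by
      simpa using setIntegral_inter_preimage_eq_mul_setIntegral hm hQ hf hB MeasurableSet.univ
    refine (ae_eq_condExp_of_forall_setIntegral_eq hn (hY.mono hm).integrable_of_finite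
      (fun _ _ _ => (hZ.mono hn).integrable_of_finite.integrableOn) (fun B hB _ => ?_)
      hZ.aestronglyMeasurable).symm
    rw [← hQμ hZm (hnm B hB), ← hQμ hY (hnm B hB),
      ← setIntegral_condExp hnG (hY.mono hm).integrable_of_finite (hn_le B hB)]
    exact setIntegral_congr_ae (hn B hB) (hQY.mono fun _ h _ => h.symm)

end Decoupling

end

theorem stmt3_general {Ω : Type*} [Fintype Ω] {mΩ : MeasurableSpace Ω}
    (μ : Measure Ω) [IsProbabilityMeasure μ]
    (t : ℕ) (ℱ 𝒢 : Filtration ℕ mΩ)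
    {Γ : Type*} [Fintype Γ] [MeasurableSpace Γ] [MeasurableSingletonClass Γ]
    (G : Ω → Γ) (hG : Measurable G)
    (h𝒢 : ∀ s, (𝒢 s : MeasurableSpace Ω) =
      (ℱ s : MeasurableSpace Ω) ⊔ MeasurableSpace.comap G inferInstance)
    (hpos : ∀ c : Γ, ∀ s ≤ t, ∀ᵐ ω ∂μ,
      0 < (μ[(G ⁻¹' {c}).indicator (fun _ => (1 : ℝ)) | ℱ s]) ω)
    (qG : ℕ → Ω → ℝ)
    (hqG : ∀ s ω, qG s ω =
      (μ[(G ⁻¹' {G ω}).indicator (fun _ => (1 : ℝ)) | ℱ s]) ω / (μ (G ⁻¹' {G ω})).toReal)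
    (Q : Measure Ω)
    (hQ : Q = μ.withDensity (fun ω => ENNReal.ofReal (qG t ω)⁻¹))
    (X : ℕ → Ω → ℝ)
    (hadapted : ∀ s ≤ t, StronglyMeasurable[ℱ s] (X s)) :
    (∀ s r, s ≤ r → r ≤ t → μ[X r | ℱ s] =ᵐ[μ] X s) ↔
    (∀ s r, s ≤ r → r ≤ t → Q[X r | 𝒢 s] =ᵐ[Q] X s) := by
  have hq : qG t = condProbRatio μ (ℱ t) G := funext (hqG t)
  have hQ_eq : Q = martingalePreservingMeasure μ (ℱ t) G := by rw [hQ, hq]; rfl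
  subst hQ_eq
  refine forall₄_congr fun s r hsr hrt => ?_
  rw [h𝒢 s]
  exact condExp_ae_eq_iff_condExp_sup_comap_ae_eq hG (ℱ.mono (hsr.trans hrt)) (ℱ.le t)
    (fun f hf C _ => setIntegral_preimage_martingalePreservingMeasure (ℱ.le t) hG
      (fun c => hpos c t le_rfl) hf C)
    ((hadapted r hrt).mono (ℱ.mono hrt)) (hadapted s (hsr.trans hrt))

/-- Martingale preservation: with `Q_t = (1/q_t^G) · P` on `𝒢 t = ℱ t ⊔ σ(G)`,
an `ℱ`-adapted process on `{0,...,t}` is a `(P, ℱ)`-martingale iff it is a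
`(Q_t, 𝒢)`-martingale. -/
theorem stmt3 {Ω : Type*} [Fintype Ω] {mΩ : MeasurableSpace Ω}
    (μ : Measure Ω) [IsProbabilityMeasure μ]
    (t : ℕ) (ℱ 𝒢 : Filtration ℕ mΩ)
    {Γ : Type*} [Fintype Γ] [MeasurableSpace Γ] [MeasurableSingletonClass Γ]
    (G : Ω → Γ) (hG : Measurable G)
    (h𝒢 : ∀ s, (𝒢 s : MeasurableSpace Ω) =
      (ℱ s : MeasurableSpace Ω) ⊔ MeasurableSpace.comap G inferInstance)
    (hposG : ∀ c : Γ, 0 < (μ (G ⁻¹' {c})).toReal)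
    (hpos : ∀ c : Γ, ∀ s ≤ t, ∀ᵐ ω ∂μ,
      0 < (μ[(G ⁻¹' {c}).indicator (fun _ => (1 : ℝ)) | ℱ s]) ω)
    (qG : ℕ → Ω → ℝ)
    (hqG : ∀ s ω, qG s ω =
      (μ[(G ⁻¹' {G ω}).indicator (fun _ => (1 : ℝ)) | ℱ s]) ω / (μ (G ⁻¹' {G ω})).toReal)
    (Q : Measure Ω)
    (hQ : Q = μ.withDensity (fun ω => ENNReal.ofReal (qG t ω)⁻¹))
    (X : ℕ → Ω → ℝ)
    (hadapted : ∀ s ≤ t, StronglyMeasurable[ℱ s] (X s)) :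
    (∀ s r, s ≤ r → r ≤ t → μ[X r | ℱ s] =ᵐ[μ] X s) ↔
    (∀ s r, s ≤ r → r ≤ t → Q[X r | 𝒢 s] =ᵐ[Q] X s) :=
  stmt3_general μ t ℱ 𝒢 G hG h𝒢 hpos qG hqG Q hQ X hadapted
end

section
/- In the multiplicative binomial (CRR) market model on {0,...,T} with deterministic interest rate r, up factor 1+b, down factor 1+a (−1 < a < r < b), up probability p ∈ (0,1), the optimal terminal discounted wealth for logarithmic utility from initial capital x > 0 is V̂_t = x · (dP/dP̂)|F_t, where P̂ is the unique risk-neutral measure with up probability (r−a)/(b−a); i.e. sup over self-financing strategies with initial wealth x and positive wealth of E[log(V̄_t(ψ))] is attained at the wealth process x · L_t^{-1} with L_t = (dP̂/dP)|F_t, and equals log x + D(P‖P̂)|F_t (the relative entropy of P with respect to P̂ restricted to F_t). -/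
/-!
Under the risk-neutral measure `P̂` the discounted price is a martingale, so for every
self-financing strategy `V_t · L_t` is a `P`-martingale, where `L_t = (dP̂/dP)|F_t`; hence
`E[V_t L_t] = x`. Applying `log y ≤ y - 1` to `y = V_t L_t / x` gives
`E[log V_t] ≤ log x + E[log L_t⁻¹]`, with equality exactly when `V_t = x / L_t`. In the
binomial model this wealth is attainable: each one-step factor of `1 / L` is an affine function
of the one-step return, so `x / L` is the wealth of the strategy that keeps a constant fraction
of its wealth in the stock.
-/

open MeasureTheory ProbabilityTheory Set

namespace CRR

abbrev tossesBefore (n : ℕ) : MeasurableSpace (ℕ → Bool) :=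
  ⨆ s < n, MeasurableSpace.comap (fun ω => ω s) inferInstance

lemma comap_coord_le_tossesBefore {s n : ℕ} (hs : s < n) :
    MeasurableSpace.comap (fun ω : ℕ → Bool => ω s) inferInstance ≤ tossesBefore n :=
  le_iSup₂ (f := fun s (_ : s < n) => MeasurableSpace.comap (fun ω : ℕ → Bool => ω s) _) s hs

lemma measurable_coord_tossesBefore {s n : ℕ} (hs : s < n) (c : Bool → ℝ) :
    Measurable[tossesBefore n] (fun ω : ℕ → Bool => c (ω s)) :=
  (measurable_of_countable c).comp (Measurable.of_comap_le (comap_coord_le_tossesBefore hs))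

lemma tossesBefore_mono {m n : ℕ} (h : m ≤ n) : tossesBefore m ≤ tossesBefore n :=
  iSup₂_le fun _ hs => comap_coord_le_tossesBefore (hs.trans_le h)

lemma tossesBefore_le_comap_restrict (n : ℕ) :
    tossesBefore n ≤ MeasurableSpace.comap (Finset.range n).restrict MeasurableSpace.pi :=
  iSup₂_le fun s hs => by
    rw [show (fun ω : ℕ → Bool => ω s) =
        (fun u => u ⟨s, Finset.mem_range.mpr hs⟩) ∘ (Finset.range n).restrict from rfl,
      ← MeasurableSpace.comap_comp]
    exact MeasurableSpace.comap_mono (measurable_pi_apply _).comap_le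

lemma tossesBefore_le (n : ℕ) : tossesBefore n ≤ MeasurableSpace.pi :=
  (tossesBefore_le_comap_restrict n).trans (Finset.measurable_restrict _).comap_le

lemma measurable_of_tossesBefore {n : ℕ} {f : (ℕ → Bool) → ℝ}
    (hf : Measurable[tossesBefore n] f) : Measurable f :=
  hf.mono (tossesBefore_le n) le_rfl

/- Such an `f` factors through the finite set `Finset.range n → Bool`, so it is bounded. -/
lemma integrable_of_measurable_tossesBefore {μ : Measure (ℕ → Bool)} [IsFiniteMeasure μ]
    {n : ℕ} {f : (ℕ → Bool) → ℝ} (hf : Measurable[tossesBefore n] f) : Integrable f μ := by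
  obtain ⟨g, -, rfl⟩ :=
    (hf.mono (tossesBefore_le_comap_restrict n) le_rfl).exists_eq_measurable_comp
  obtain ⟨u, hu⟩ := Finite.exists_max fun u => |g u|
  exact (integrable_const |g u|).mono' (measurable_of_tossesBefore hf).aestronglyMeasurable
    (ae_of_all _ fun ω => hu _)

def coordProd (c : Bool → ℝ) (n : ℕ) (ω : ℕ → Bool) : ℝ := ∏ s ∈ Finset.range n, c (ω s)

@[simp] lemma coordProd_zero (c : Bool → ℝ) : coordProd c 0 = 1 := by
  funext ω; simp [coordProd]

lemma coordProd_succ (c : Bool → ℝ) (n : ℕ) (ω : ℕ → Bool) :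
    coordProd c (n + 1) ω = coordProd c n ω * c (ω n) :=
  Finset.prod_range_succ _ _

lemma coordProd_pos {c : Bool → ℝ} (hc : ∀ v, 0 < c v) (n : ℕ) (ω : ℕ → Bool) :
    0 < coordProd c n ω :=
  Finset.prod_pos fun s _ => hc (ω s)

lemma coordProd_ne_zero {c : Bool → ℝ} (hc : ∀ v, c v ≠ 0) (n : ℕ) (ω : ℕ → Bool) :
    coordProd c n ω ≠ 0 :=
  Finset.prod_ne_zero_iff.2 fun s _ => hc (ω s)

lemma measurable_coordProd (c : Bool → ℝ) {n m : ℕ} (h : n ≤ m) :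
    Measurable[tossesBefore m] (coordProd c n) :=
  Finset.measurable_prod _ fun _ hs =>
    measurable_coord_tossesBefore ((Finset.mem_range.1 hs).trans_le h) c

def price (S0 : ℝ) (R : Bool → ℝ) (n : ℕ) (ω : ℕ → Bool) : ℝ := S0 * coordProd R n ω

lemma measurable_price (S0 : ℝ) (R : Bool → ℝ) {n m : ℕ} (h : n ≤ m) :
    Measurable[tossesBefore m] (price S0 R n) :=
  (measurable_coordProd R h).const_mul S0

def wealth (x : ℝ) (S φ : ℕ → (ℕ → Bool) → ℝ) (n : ℕ) (ω : ℕ → Bool) : ℝ :=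
  x + ∑ s ∈ Finset.range n, φ s ω * (S (s + 1) ω - S s ω)

@[simp] lemma wealth_zero (x : ℝ) (S φ : ℕ → (ℕ → Bool) → ℝ) : wealth x S φ 0 = fun _ => x := by
  funext ω; simp [wealth]

lemma wealth_succ (x : ℝ) (S φ : ℕ → (ℕ → Bool) → ℝ) (n : ℕ) (ω : ℕ → Bool) :
    wealth x S φ (n + 1) ω = wealth x S φ n ω + φ n ω * (S (n + 1) ω - S n ω) := by
  rw [wealth, wealth, Finset.sum_range_succ, add_assoc]

lemma measurable_wealth (x : ℝ) {S φ : ℕ → (ℕ → Bool) → ℝ}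
    (hS : ∀ n, Measurable[tossesBefore n] (S n)) (hφ : ∀ s, Measurable[tossesBefore s] (φ s))
    {n m : ℕ} (h : n ≤ m) : Measurable[tossesBefore m] (wealth x S φ n) := by
  refine Measurable.const_add (Finset.measurable_sum _ fun s hs => ?_) x
  have hsn : s < n := Finset.mem_range.1 hs
  exact ((hφ s).mono (tossesBefore_mono (hsn.le.trans h)) le_rfl).mul
    (((hS (s + 1)).mono (tossesBefore_mono (hsn.trans_le h)) le_rfl).sub
      ((hS s).mono (tossesBefore_mono (hsn.le.trans h)) le_rfl))

noncomputable def logOptimalStrategy (x S0 K : ℝ) (R ξ : Bool → ℝ) (s : ℕ) (ω : ℕ → Bool) :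
    ℝ :=
  x * K / (coordProd ξ s ω * price S0 R s ω)

lemma measurable_logOptimalStrategy (x S0 K : ℝ) (R ξ : Bool → ℝ) (s : ℕ) :
    Measurable[tossesBefore s] (logOptimalStrategy x S0 K R ξ s) :=
  measurable_const.div ((measurable_coordProd ξ le_rfl).mul (measurable_price S0 R le_rfl))

/- The strategy keeps the fraction `K` of its current wealth `x / coordProd ξ s` in the stock;
`hrep` says that this replicates the one-step factor `1 / ξ`. -/
theorem wealth_logOptimalStrategy {R ξ : Bool → ℝ} (hR : ∀ v, R v ≠ 0) (hξ : ∀ v, ξ v ≠ 0)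
    {S0 K : ℝ} (hS0 : S0 ≠ 0) (hrep : ∀ v, (ξ v)⁻¹ = 1 + K * (R v - 1)) (x : ℝ) (n : ℕ)
    (ω : ℕ → Bool) :
    wealth x (price S0 R) (logOptimalStrategy x S0 K R ξ) n ω = x * (coordProd ξ n ω)⁻¹ := by
  induction n with
  | zero => simp
  | succ n ih =>
    have hRn := coordProd_ne_zero hR n ω
    have hξn := coordProd_ne_zero hξ n ω
    rw [wealth_succ, ih, logOptimalStrategy, price, price, coordProd_succ, coordProd_succ,
      mul_inv, hrep]
    field_simp

section LogUtility

variable {Ω : Type*} [MeasurableSpace Ω] {μ : Measure Ω} [IsProbabilityMeasure μ]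

theorem integral_log_le_of_integral_mul_eq {V Z : Ω → ℝ} {x : ℝ} (hx : 0 < x)
    (hV : ∀ᵐ ω ∂μ, 0 < V ω) (hZ : ∀ᵐ ω ∂μ, 0 < Z ω)
    (hlogV : Integrable (fun ω => Real.log (V ω)) μ)
    (hlogZ : Integrable (fun ω => Real.log (Z ω)⁻¹) μ)
    (hVZ : Integrable (fun ω => V ω * Z ω) μ) (hmean : ∫ ω, V ω * Z ω ∂μ = x) :
    ∫ ω, Real.log (V ω) ∂μ ≤ Real.log x + ∫ ω, Real.log (Z ω)⁻¹ ∂μ := by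
  have hpt : ∀ᵐ ω ∂μ, Real.log (V ω) ≤
      Real.log x + Real.log (Z ω)⁻¹ + (V ω * Z ω / x - 1) := by
    filter_upwards [hV, hZ] with ω hVω hZω
    have h := Real.log_le_sub_one_of_pos (div_pos (mul_pos hVω hZω) hx)
    rw [Real.log_div (mul_pos hVω hZω).ne' hx.ne', Real.log_mul hVω.ne' hZω.ne'] at h
    rw [Real.log_inv]
    linarith
  have hlogxZ : Integrable (fun ω => Real.log x + Real.log (Z ω)⁻¹) μ :=
    (integrable_const _).add hlogZ
  have hgap : Integrable (fun ω => V ω * Z ω / x - 1) μ :=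
    (hVZ.div_const x).sub (integrable_const 1)
  calc ∫ ω, Real.log (V ω) ∂μ
      ≤ ∫ ω, Real.log x + Real.log (Z ω)⁻¹ + (V ω * Z ω / x - 1) ∂μ :=
        integral_mono_ae hlogV (hlogxZ.add hgap) hpt
    _ = Real.log x + ∫ ω, Real.log (Z ω)⁻¹ ∂μ := by
        rw [integral_add hlogxZ hgap, integral_add (integrable_const _) hlogZ,
          integral_sub (hVZ.div_const x) (integrable_const 1), integral_div, hmean,
          div_self hx.ne']
        simp

lemma integral_log_mul_inv {Z : Ω → ℝ} {x : ℝ} (hx : x ≠ 0) (hZ : ∀ ω, Z ω ≠ 0)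
    (hlogZ : Integrable (fun ω => Real.log (Z ω)⁻¹) μ) :
    ∫ ω, Real.log (x * (Z ω)⁻¹) ∂μ = Real.log x + ∫ ω, Real.log (Z ω)⁻¹ ∂μ := by
  simp_rw [Real.log_mul hx (inv_ne_zero (hZ _))]
  rw [integral_add (integrable_const _) hlogZ, integral_const]
  simp

end LogUtility

def coinMean (p : ℝ) (c : Bool → ℝ) : ℝ := p * c true + (1 - p) * c false

section CoinTossing

variable {μ : Measure (ℕ → Bool)} [IsProbabilityMeasure μ] {p : ℝ}

lemma integral_coord (hp : 0 ≤ p) (hmarg : ∀ s, μ {ω | ω s = true} = ENNReal.ofReal p)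
    (n : ℕ) (c : Bool → ℝ) : ∫ ω, c (ω n) ∂μ = coinMean p c := by
  have hmeas : Measurable fun ω : ℕ → Bool => ω n := measurable_pi_apply n
  have htrue : μ.real ((fun ω : ℕ → Bool => ω n) ⁻¹' {true}) = p := by
    simp [measureReal_def, Set.preimage, hmarg, hp]
  have hfalse : μ.real ((fun ω : ℕ → Bool => ω n) ⁻¹' {false}) = 1 - p := by
    rw [← htrue, ← probReal_compl_eq_one_sub (hmeas (measurableSet_singleton true))]
    congr 1; ext ω; simp
  rw [← integral_map hmeas.aemeasurable (measurable_of_countable c).aestronglyMeasurable,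
    integral_fintype Integrable.of_finite, Fintype.sum_bool,
    map_measureReal_apply hmeas (measurableSet_singleton _),
    map_measureReal_apply hmeas (measurableSet_singleton _), htrue, hfalse, coinMean]
  simp only [smul_eq_mul]

lemma integral_mul_coord (hp : 0 ≤ p) (hindep : iIndepFun (fun s ω => ω s) μ)
    (hmarg : ∀ s, μ {ω | ω s = true} = ENNReal.ofReal p) {n : ℕ} {f : (ℕ → Bool) → ℝ}
    (hf : Measurable[tossesBefore n] f) (c : Bool → ℝ) :
    ∫ ω, f ω * c (ω n) ∂μ = (∫ ω, f ω ∂μ) * coinMean p c := by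
  have hpast : Indep (tossesBefore n)
      (MeasurableSpace.comap (fun ω : ℕ → Bool => ω n) inferInstance) μ := by
    have h := indep_iSup_of_disjoint (fun s => (measurable_pi_apply s).comap_le)
      ((iIndepFun_iff_iIndep _ _ μ).1 hindep) (S := Iio n) (T := {n}) (by simp)
    exact indep_of_indep_of_le_right h (le_iSup₂_of_le n rfl le_rfl)
  have hfc : IndepFun f (fun ω => c (ω n)) μ := by
    rw [IndepFun_iff_Indep]
    refine indep_of_indep_of_le hpast hf.comap_le ?_
    rw [show (fun ω : ℕ → Bool => c (ω n)) = c ∘ fun ω => ω n from rfl,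
      ← MeasurableSpace.comap_comp]
    exact MeasurableSpace.comap_mono (measurable_of_countable c).comap_le
  rw [hfc.integral_fun_mul_eq_mul_integral (measurable_of_tossesBefore hf).aestronglyMeasurable
    ((measurable_of_countable c).comp (measurable_pi_apply n)).aestronglyMeasurable,
    integral_coord hp hmarg]

/- `hξ` and `hRξ` say that `v ↦ p_v ξ v` is a probability on `Bool` under which the one-step
return `R` has mean `1`, i.e. `coordProd ξ` is the density process of a martingale measure. -/
theorem integral_wealth_mul_coordProd (hp : 0 ≤ p) (hindep : iIndepFun (fun s ω => ω s) μ)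
    (hmarg : ∀ s, μ {ω | ω s = true} = ENNReal.ofReal p) {R ξ : Bool → ℝ}
    (hξ : coinMean p ξ = 1) (hRξ : coinMean p (fun v => (R v - 1) * ξ v) = 0) (x S0 : ℝ)
    {φ : ℕ → (ℕ → Bool) → ℝ} (hφ : ∀ s, Measurable[tossesBefore s] (φ s)) (n : ℕ) :
    ∫ ω, wealth x (price S0 R) φ n ω * coordProd ξ n ω ∂μ = x := by
  induction n with
  | zero => simp
  | succ n ih =>
    have hA : Measurable[tossesBefore n] fun ω => wealth x (price S0 R) φ n ω * coordProd ξ n ω :=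
      (measurable_wealth x (fun _ => measurable_price S0 R le_rfl) hφ le_rfl).mul
        (measurable_coordProd ξ le_rfl)
    have hB : Measurable[tossesBefore n] fun ω => φ n ω * price S0 R n ω * coordProd ξ n ω :=
      ((hφ n).mul (measurable_price S0 R le_rfl)).mul (measurable_coordProd ξ le_rfl)
    have hstep : ∀ ω, wealth x (price S0 R) φ (n + 1) ω * coordProd ξ (n + 1) ω =
        wealth x (price S0 R) φ n ω * coordProd ξ n ω * ξ (ω n)
          + φ n ω * price S0 R n ω * coordProd ξ n ω * ((R (ω n) - 1) * ξ (ω n)) := by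
      intro ω
      simp only [wealth_succ, price, coordProd_succ]
      ring
    have hint : ∀ c : Bool → ℝ, ∀ {f : (ℕ → Bool) → ℝ}, Measurable[tossesBefore n] f →
        Integrable (fun ω => f ω * c (ω n)) μ := fun c _ hf =>
      integrable_of_measurable_tossesBefore (n := n + 1)
        ((hf.mono (tossesBefore_mono n.le_succ) le_rfl).mul
          (measurable_coord_tossesBefore n.lt_succ_self c))
    simp_rw [hstep]
    rw [integral_add (hint ξ hA) (hint (fun v => (R v - 1) * ξ v) hB),
      integral_mul_coord hp hindep hmarg hA,
      integral_mul_coord hp hindep hmarg hB (fun v => (R v - 1) * ξ v), hξ, hRξ, ih]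
    ring

theorem integral_log_wealth_le (hp : 0 ≤ p) (hindep : iIndepFun (fun s ω => ω s) μ)
    (hmarg : ∀ s, μ {ω | ω s = true} = ENNReal.ofReal p) {R ξ : Bool → ℝ}
    (hξ_pos : ∀ v, 0 < ξ v) (hξ : coinMean p ξ = 1)
    (hRξ : coinMean p (fun v => (R v - 1) * ξ v) = 0) {x : ℝ} (hx : 0 < x) (S0 : ℝ)
    {φ : ℕ → (ℕ → Bool) → ℝ} (hφ : ∀ s, Measurable[tossesBefore s] (φ s)) {t : ℕ}
    (hpos : ∀ ω, 0 < wealth x (price S0 R) φ t ω) :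
    ∫ ω, Real.log (wealth x (price S0 R) φ t ω) ∂μ ≤
      Real.log x + ∫ ω, Real.log (coordProd ξ t ω)⁻¹ ∂μ := by
  have hV := measurable_wealth x (fun _ => measurable_price S0 R le_rfl) hφ (le_refl t)
  have hL := measurable_coordProd ξ (le_refl t)
  exact integral_log_le_of_integral_mul_eq hx (ae_of_all _ hpos)
    (ae_of_all _ (coordProd_pos hξ_pos t))
    (integrable_of_measurable_tossesBefore (Real.measurable_log.comp hV))
    (integrable_of_measurable_tossesBefore (Real.measurable_log.comp hL.inv))
    (integrable_of_measurable_tossesBefore (hV.mul hL))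
    (integral_wealth_mul_coordProd hp hindep hmarg hξ hRξ x S0 hφ t)

end CoinTossing

noncomputable def discountedReturn (a b r : ℝ) (v : Bool) : ℝ :=
  (1 + if v then b else a) / (1 + r)

/- The density of a coin with bias `q` with respect to a coin with bias `p`. -/
noncomputable def densityStep (p q : ℝ) (v : Bool) : ℝ := if v then q / p else (1 - q) / (1 - p)

section Parameters

variable {a b r p : ℝ}

lemma riskNeutralProb_mem_Ioo (har : a < r) (hrb : r < b) : (r - a) / (b - a) ∈ Ioo 0 1 :=
  ⟨div_pos (by linarith) (by linarith), (div_lt_one (by linarith)).2 (by linarith)⟩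

lemma discountedReturn_ne_zero (ha : -1 < a) (har : a < r) (hrb : r < b) (v : Bool) :
    discountedReturn a b r v ≠ 0 := by
  unfold discountedReturn
  cases v <;> simp only [Bool.false_eq_true, if_false, if_true] <;>
    exact (div_pos (by linarith) (by linarith)).ne'

lemma densityStep_pos {q : ℝ} (hp : p ∈ Ioo 0 1) (hq : q ∈ Ioo 0 1) (v : Bool) :
    0 < densityStep p q v := by
  unfold densityStep
  cases v <;> simp only [Bool.false_eq_true, if_false, if_true]
  · exact div_pos (by linarith [hq.2]) (by linarith [hp.2])
  · exact div_pos hq.1 hp.1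

lemma coinMean_densityStep {q : ℝ} (hp : p ∈ Ioo 0 1) : coinMean p (densityStep p q) = 1 := by
  have := hp.1.ne'
  have : 1 - p ≠ 0 := by linarith [hp.2]
  simp only [coinMean, densityStep, if_true, Bool.false_eq_true, if_false]
  field_simp
  ring

lemma coinMean_discountedReturn_sub_one_mul_densityStep (hp : p ∈ Ioo 0 1) (ha : -1 < a)
    (har : a < r) (hrb : r < b) :
    coinMean p (fun v => (discountedReturn a b r v - 1) * densityStep p ((r - a) / (b - a)) v) =
      0 := by
  have := hp.1.ne'
  have : 1 - p ≠ 0 := by linarith [hp.2]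
  have : b - a ≠ 0 := by linarith
  have : 1 + r ≠ 0 := by linarith
  simp only [coinMean, discountedReturn, densityStep, if_true, Bool.false_eq_true, if_false]
  field_simp
  ring

lemma inv_densityStep_eq_one_add_mul (hp : p ∈ Ioo 0 1) (ha : -1 < a) (har : a < r)
    (hrb : r < b) (v : Bool) :
    (densityStep p ((r - a) / (b - a)) v)⁻¹ =
      1 + (p / ((r - a) / (b - a)) - 1) * (1 + r) / (b - r) * (discountedReturn a b r v - 1) := by
  have := hp.1.ne'
  have : 1 - p ≠ 0 := by linarith [hp.2]
  have : b - a ≠ 0 := by linarith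
  have : r - a ≠ 0 := by linarith
  have : b - r ≠ 0 := by linarith
  have : 1 + r ≠ 0 := by linarith
  unfold densityStep discountedReturn
  cases v <;> simp only [Bool.false_eq_true, if_false, if_true]
  · rw [show 1 - (r - a) / (b - a) = (b - r) / (b - a) by field_simp; ring]
    field_simp
    ring
  · field_simp
    ring

end Parameters

end CRR

open CRR in
theorem stmt13_general (μ : Measure (ℕ → Bool)) [IsProbabilityMeasure μ]
    (t : ℕ)
    (a b r p S0 x : ℝ) (ha : -1 < a) (har : a < r) (hrb : r < b)
    (hp : p ∈ Set.Ioo (0 : ℝ) 1) (hS0 : 0 < S0) (hx : 0 < x)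
    (hindep : iIndepFun
      (fun s ω => ω s) μ)
    (hmarg : ∀ s, μ {ω | ω s = true} = ENNReal.ofReal p)
    (ℱ : Filtration ℕ (MeasurableSpace.pi))
    (hℱ : ∀ n, (ℱ n : MeasurableSpace (ℕ → Bool)) =
      ⨆ s < n, MeasurableSpace.comap (fun ω => ω s) inferInstance)
    (Stil : ℕ → (ℕ → Bool) → ℝ)
    (hS : ∀ n ω, Stil n ω = S0 * ∏ s ∈ Finset.range n, (1 + (if ω s then b else a)) / (1 + r))
    (qhat : ℝ) (hqhat : qhat = (r - a) / (b - a))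
    (L : ℕ → (ℕ → Bool) → ℝ)
    (hL : ∀ n ω, L n ω = ∏ s ∈ Finset.range n,
      (if ω s then qhat / p else (1 - qhat) / (1 - p)))
    (V : (ℕ → (ℕ → Bool) → ℝ) → ℕ → (ℕ → Bool) → ℝ)
    (hV : ∀ φ n ω, V φ n ω = x + ∑ s ∈ Finset.range n, φ s ω * (Stil (s+1) ω - Stil s ω)) :
    IsGreatest {y : ℝ | ∃ φ : ℕ → (ℕ → Bool) → ℝ,
        (∀ s, StronglyMeasurable[ℱ s] (φ s)) ∧
        (∀ n ≤ t, ∀ ω, 0 < V φ n ω) ∧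
        y = ∫ ω, Real.log (V φ t ω) ∂μ}
      (Real.log x + ∫ ω, Real.log (L t ω)⁻¹ ∂μ) ∧
    ∃ φ : ℕ → (ℕ → Bool) → ℝ,
      (∀ s, StronglyMeasurable[ℱ s] (φ s)) ∧
      (∀ n ≤ t, ∀ ω, 0 < V φ n ω) ∧
      (fun ω => V φ t ω) =ᵐ[μ] fun ω => x * (L t ω)⁻¹ := by
  subst hqhat
  set R := discountedReturn a b r
  set ξ := densityStep p ((r - a) / (b - a))
  obtain rfl : Stil = price S0 R := funext₂ hS
  obtain rfl : L = coordProd ξ := funext₂ hL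
  obtain rfl : V = wealth x (price S0 R) := by funext φ n ω; exact hV φ n ω
  have hξ_pos := densityStep_pos hp (riskNeutralProb_mem_Ioo har hrb)
  set φhat := logOptimalStrategy x S0 ((p / ((r - a) / (b - a)) - 1) * (1 + r) / (b - r)) R ξ
  have hφhat : ∀ s, StronglyMeasurable[ℱ s] (φhat s) := fun s => by
    rw [hℱ s]
    exact (measurable_logOptimalStrategy _ _ _ _ _ s).stronglyMeasurable
  have hVhat : ∀ n ω, wealth x (price S0 R) φhat n ω = x * (coordProd ξ n ω)⁻¹ :=
    wealth_logOptimalStrategy (discountedReturn_ne_zero ha har hrb) (fun v => (hξ_pos v).ne')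
      hS0.ne' (inv_densityStep_eq_one_add_mul hp ha har hrb) x
  have hVhat_pos : ∀ n ≤ t, ∀ ω, 0 < wealth x (price S0 R) φhat n ω :=
    fun n _ ω => (hVhat n ω).symm ▸ mul_pos hx (inv_pos.2 (coordProd_pos hξ_pos n ω))
  refine ⟨⟨⟨φhat, hφhat, hVhat_pos, ?_⟩, ?_⟩, φhat, hφhat, hVhat_pos, ae_of_all _ (hVhat t)⟩
  · simp_rw [hVhat]
    exact (integral_log_mul_inv hx.ne' (coordProd_ne_zero (fun v => (hξ_pos v).ne') t)
      (integrable_of_measurable_tossesBefore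
        (Real.measurable_log.comp (measurable_coordProd ξ le_rfl).inv))).symm
  · rintro y ⟨φ, hφ, hpos, rfl⟩
    refine integral_log_wealth_le hp.1.le hindep hmarg hξ_pos (coinMean_densityStep hp)
      (coinMean_discountedReturn_sub_one_mul_densityStep hp ha har hrb) hx S0
      (fun s => ?_) (hpos t le_rfl)
    have hφs := (hφ s).measurable
    rwa [hℱ s] at hφs

/-- Optimal logarithmic utility in the CRR model: the supremum of `E[log V̄_t(ψ)]` over
self-financing strategies with initial capital `x` and positive wealth equals
`log x + D(P‖P̂)|F_t = log x + E[log (L_t)⁻¹]`, and is attained at the wealth process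
`x · (dP/dP̂)|F_t = x · L_t⁻¹`, where `P̂` has up-probability `(r−a)/(b−a)`. -/
theorem stmt13 (μ : Measure (ℕ → Bool)) [IsProbabilityMeasure μ]
    (T t : ℕ) (ht : t ≤ T)
    (a b r p S0 x : ℝ) (ha : -1 < a) (har : a < r) (hrb : r < b)
    (hp : p ∈ Set.Ioo (0 : ℝ) 1) (hS0 : 0 < S0) (hx : 0 < x)
    (hindep : iIndepFun
      (fun s ω => ω s) μ)
    (hmarg : ∀ s, μ {ω | ω s = true} = ENNReal.ofReal p)
    (ℱ : Filtration ℕ (MeasurableSpace.pi))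
    (hℱ : ∀ n, (ℱ n : MeasurableSpace (ℕ → Bool)) =
      ⨆ s < n, MeasurableSpace.comap (fun ω => ω s) inferInstance)
    (Stil : ℕ → (ℕ → Bool) → ℝ)
    (hS : ∀ n ω, Stil n ω = S0 * ∏ s ∈ Finset.range n, (1 + (if ω s then b else a)) / (1 + r))
    (qhat : ℝ) (hqhat : qhat = (r - a) / (b - a))
    (L : ℕ → (ℕ → Bool) → ℝ)
    (hL : ∀ n ω, L n ω = ∏ s ∈ Finset.range n,
      (if ω s then qhat / p else (1 - qhat) / (1 - p)))
    (V : (ℕ → (ℕ → Bool) → ℝ) → ℕ → (ℕ → Bool) → ℝ)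
    (hV : ∀ φ n ω, V φ n ω = x + ∑ s ∈ Finset.range n, φ s ω * (Stil (s+1) ω - Stil s ω)) :
    IsGreatest {y : ℝ | ∃ φ : ℕ → (ℕ → Bool) → ℝ,
        (∀ s, StronglyMeasurable[ℱ s] (φ s)) ∧
        (∀ n ≤ t, ∀ ω, 0 < V φ n ω) ∧
        y = ∫ ω, Real.log (V φ t ω) ∂μ}
      (Real.log x + ∫ ω, Real.log (L t ω)⁻¹ ∂μ) ∧
    ∃ φ : ℕ → (ℕ → Bool) → ℝ,
      (∀ s, StronglyMeasurable[ℱ s] (φ s)) ∧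
      (∀ n ≤ t, ∀ ω, 0 < V φ n ω) ∧
      (fun ω => V φ t ω) =ᵐ[μ] fun ω => x * (L t ω)⁻¹ :=
  stmt13_general μ t a b r p S0 x ha har hrb hp hS0 hx hindep hmarg ℱ hℱ Stil hS qhat hqhat L hL V
    hV
end

section
/- In the one-period two-state complete market with unique equivalent martingale measure P̂ of density L = dP̂/dP, consider power utility u(x) = x^α/α (α < 1, α ≠ 0, β = α/(α−1)) and initial capital x > 0. Then V̂ = x · E[L^β]^{−1} · L^{β−1} is the optimal discounted terminal wealth: it satisfies E_{P̂}[V̂] = x, and for any other wealth W with E_{P̂}[W] = x and W > 0, E[W^α/α] ≤ E[V̂^α/α]. Moreover, the optimal expected utility equals (x^α/α) · E[L^β]^{1−α}. -/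
open Real

/-- Bernoulli-type inequality: for `α < 1`, `α ≠ 0` and `t > 0`,
`t^α/α ≤ 1/α + (t - 1)`. -/
lemma bern_pow {α t : ℝ} (hα : α < 1) (hα0 : α ≠ 0) (ht : 0 < t) :
    t ^ α / α ≤ 1 / α + (t - 1) := by
  have hiden : (1 / α + (t - 1)) * α = 1 + α * (t - 1) := by
    field_simp
  rcases lt_or_gt_of_ne hα0 with hneg | hpos
  · -- α < 0 : t^α ≥ 1 + α (t-1), divide by α < 0
    have h1 : 1 + α * (t - 1) ≤ t ^ α := by
      have hlog : Real.log t ≤ t - 1 := Real.log_le_sub_one_of_pos ht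
      have h2 : α * (t - 1) ≤ α * Real.log t :=
        mul_le_mul_of_nonpos_left hlog hneg.le
      have h3 : Real.log t * α + 1 ≤ Real.exp (Real.log t * α) :=
        Real.add_one_le_exp (Real.log t * α)
      rw [Real.rpow_def_of_pos ht]
      nlinarith
    rw [div_le_iff_of_neg hneg, hiden]
    exact h1
  · -- 0 < α < 1 : Bernoulli
    have hs : (-1 : ℝ) ≤ t - 1 := by linarith
    have h1 : (1 + (t - 1)) ^ α ≤ 1 + α * (t - 1) :=
      rpow_one_add_le_one_add_mul_self hs hpos.le hα.le
    have ht' : 1 + (t - 1) = t := by ring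
    rw [ht'] at h1
    rw [div_le_iff₀ hpos, hiden]
    exact h1

/-- Gradient inequality for the power utility. -/
lemma grad_pow {α v w : ℝ} (hα : α < 1) (hα0 : α ≠ 0) (hv : 0 < v) (hw : 0 < w) :
    w ^ α / α ≤ v ^ α / α + v ^ (α - 1) * (w - v) := by
  have ht : 0 < w / v := div_pos hw hv
  have hb := bern_pow hα hα0 ht
  have hva : (0:ℝ) < v ^ α := Real.rpow_pos_of_pos hv α
  have hw' : w = v * (w / v) := by field_simp
  have hwα : w ^ α = v ^ α * (w / v) ^ α := by
    rw [hw', Real.mul_rpow hv.le ht.le]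
    congr 1
    field_simp
  have hvα1 : v ^ (α - 1) = v ^ α / v := by
    rw [Real.rpow_sub hv, Real.rpow_one]
  rw [hwα, hvα1]
  have key : v ^ α * ((w / v) ^ α / α) ≤ v ^ α * (1 / α + (w / v - 1)) :=
    mul_le_mul_of_nonneg_left hb hva.le
  calc v ^ α * (w / v) ^ α / α = v ^ α * ((w / v) ^ α / α) := by ring
    _ ≤ v ^ α * (1 / α + (w / v - 1)) := key
    _ = v ^ α / α + v ^ α / v * (w - v) := by field_simp

/-- Power utility in the one-period two-state complete market: with `L = dP̂/dP` and
`β = α/(α−1)`, the wealth `V̂ = x · E[L^β]⁻¹ · L^{β−1}` satisfies the budget constraint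
`E_{P̂}[V̂] = x` and maximizes `E[W^α/α]` over positive wealths with `E_{P̂}[W] = x`;
the optimal expected utility is `(x^α/α) · E[L^β]^{1−α}`. -/
theorem stmt15 (p qhat x α u d S0 : ℝ)
    (hp : p ∈ Set.Ioo (0 : ℝ) 1) (hq : qhat ∈ Set.Ioo (0 : ℝ) 1)
    (hud : d < u) (hmart : qhat * u + (1 - qhat) * d = S0)
    (hα : α < 1) (hα0 : α ≠ 0) (hx : 0 < x)
    (β : ℝ) (hβ : β = α / (α - 1))
    (E Ehat : (Bool → ℝ) → ℝ)
    (hE : ∀ f, E f = p * f true + (1 - p) * f false)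
    (hEhat : ∀ f, Ehat f = qhat * f true + (1 - qhat) * f false)
    (L : Bool → ℝ) (hL : L true = qhat / p ∧ L false = (1 - qhat) / (1 - p))
    (Vhat : Bool → ℝ)
    (hVhat : ∀ ω, Vhat ω = x * (E (fun ω' => L ω' ^ β))⁻¹ * L ω ^ (β - 1)) :
    Ehat Vhat = x ∧
    (∀ W : Bool → ℝ, (∀ ω, 0 < W ω) → Ehat W = x →
      E (fun ω => W ω ^ α / α) ≤ E (fun ω => Vhat ω ^ α / α)) ∧
    E (fun ω => Vhat ω ^ α / α) = x ^ α / α * (E (fun ω => L ω ^ β)) ^ (1 - α) := by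
  obtain ⟨hp0, hp1⟩ := hp
  obtain ⟨hq0, hq1⟩ := hq
  have hp1' : (0:ℝ) < 1 - p := by linarith
  have hq1' : (0:ℝ) < 1 - qhat := by linarith
  obtain ⟨hLt, hLf⟩ := hL
  have ha : 0 < L true := by rw [hLt]; positivity
  have hb : 0 < L false := by rw [hLf]; positivity
  have hqa : qhat = p * L true := by rw [hLt]; field_simp
  have hqb : 1 - qhat = (1 - p) * L false := by rw [hLf]; field_simp
  have hα1 : α - 1 ≠ 0 := by
    intro h
    rw [sub_eq_zero] at h
    exact hα.ne h
  -- exponent identities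
  have hβ1 : β - 1 = 1 / (α - 1) := by rw [hβ]; field_simp; ring
  have hβα : (β - 1) * α = β := by rw [hβ1, hβ]; field_simp
  have hβα1 : (β - 1) * (α - 1) = 1 := by rw [hβ1]; field_simp
  -- the constant A = E[L^β]
  set A := E (fun ω' => L ω' ^ β) with hA_def
  have hAval : A = p * L true ^ β + (1 - p) * L false ^ β := by rw [hA_def, hE]
  have haβ : (0:ℝ) < L true ^ β := Real.rpow_pos_of_pos ha β
  have hbβ : (0:ℝ) < L false ^ β := Real.rpow_pos_of_pos hb β
  have hA : 0 < A := by rw [hAval]; positivity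
  set c := x * A⁻¹ with hc_def
  have hc : 0 < c := by positivity
  have hVt : Vhat true = c * L true ^ (β - 1) := hVhat true
  have hVf : Vhat false = c * L false ^ (β - 1) := hVhat false
  have hVt0 : 0 < Vhat true := by rw [hVt]; positivity
  have hVf0 : 0 < Vhat false := by rw [hVf]; positivity
  -- key : t * t^(β-1) = t^β
  have hmul : ∀ t : ℝ, 0 < t → t * t ^ (β - 1) = t ^ β := by
    intro t ht
    rw [Real.rpow_sub ht, Real.rpow_one]
    field_simp
  -- Budget constraint
  have hbudget : Ehat Vhat = x := by
    rw [hEhat, hVt, hVf, hqb, hqa]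
    have h1 : p * L true * (c * L true ^ (β - 1)) = p * c * L true ^ β := by
      rw [← hmul (L true) ha]; ring
    have h2 : (1 - p) * L false * (c * L false ^ (β - 1)) = (1 - p) * c * L false ^ β := by
      rw [← hmul (L false) hb]; ring
    rw [h1, h2]
    have h3 : p * c * L true ^ β + (1 - p) * c * L false ^ β = c * A := by
      rw [hAval]; ring
    rw [h3, hc_def]
    field_simp
  -- V^α values
  have hVα : ∀ t : ℝ, 0 < t → (c * t ^ (β - 1)) ^ α = c ^ α * t ^ β := by
    intro t ht
    rw [Real.mul_rpow hc.le (Real.rpow_pos_of_pos ht _).le,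
      ← Real.rpow_mul ht.le, hβα]
  have hVtα : Vhat true ^ α = c ^ α * L true ^ β := by rw [hVt, hVα (L true) ha]
  have hVfα : Vhat false ^ α = c ^ α * L false ^ β := by rw [hVf, hVα (L false) hb]
  -- V^(α-1) values
  have hVgrad : ∀ t : ℝ, 0 < t → (c * t ^ (β - 1)) ^ (α - 1) = c ^ (α - 1) * t := by
    intro t ht
    rw [Real.mul_rpow hc.le (Real.rpow_pos_of_pos ht _).le,
      ← Real.rpow_mul ht.le, hβα1, Real.rpow_one]
  have hVtg : Vhat true ^ (α - 1) = c ^ (α - 1) * L true := by rw [hVt, hVgrad (L true) ha]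
  have hVfg : Vhat false ^ (α - 1) = c ^ (α - 1) * L false := by rw [hVf, hVgrad (L false) hb]
  -- optimal utility value
  have hopt : E (fun ω => Vhat ω ^ α / α) = x ^ α / α * A ^ (1 - α) := by
    rw [hE]
    simp only [hVtα, hVfα]
    have hcα : c ^ α = x ^ α * (A ^ α)⁻¹ := by
      rw [hc_def, Real.mul_rpow hx.le (by positivity), Real.inv_rpow hA.le]
    have hA1α : A ^ (1 - α) = A / A ^ α := by
      rw [Real.rpow_sub hA, Real.rpow_one]
    rw [hcα, hA1α]
    have hAα : (0:ℝ) < A ^ α := Real.rpow_pos_of_pos hA α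
    field_simp
    rw [hAval]
  refine ⟨hbudget, ?_, hopt⟩
  intro W hW hWbud
  rw [hE, hE]
  have g1 := grad_pow hα hα0 hVt0 (hW true)
  have g2 := grad_pow hα hα0 hVf0 (hW false)
  have hEW : qhat * W true + (1 - qhat) * W false = x := by
    rw [hEhat] at hWbud; exact hWbud
  have hEV : qhat * Vhat true + (1 - qhat) * Vhat false = x := by
    rw [hEhat] at hbudget; exact hbudget
  rw [hqb, hqa] at hEW hEV
  have e1 : p * (Vhat true ^ (α - 1) * (W true - Vhat true)) +
      (1 - p) * (Vhat false ^ (α - 1) * (W false - Vhat false)) = 0 := by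
    rw [hVtg, hVfg]
    have h0 : p * L true * (W true - Vhat true) +
        (1 - p) * L false * (W false - Vhat false) = 0 := by linarith
    linear_combination c ^ (α - 1) * h0
  linarith [mul_le_mul_of_nonneg_left g1 hp0.le,
    mul_le_mul_of_nonneg_left g2 hp1'.le, e1]
end
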